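/- arXiv:2102.00963 — 2 statements merged into one kernel-verified Lean document; each statement's English description precedes it below -/
import Mathlib

section
/- Fix an integer d ≥ 3 and z ∈ ℂ⁺. Let 𝒢 be a finite tree (a connected graph with no cycles) with all vertex degrees at most d, equipped with the zero deficit function. Then the matrix H_𝒢 − z − Σ_v ((d − deg_𝒢(v))/(d−1))·m_sc(z)·e_vv is invertible, and its inverse satisfies G_{ij}(Ext(𝒢, m_sc(z)), z) = m_d(z)·(−m_sc(z)/√(d−1))^{dist_𝒢(i,j)} for all vertices i, j, where dist_𝒢 is the graph distance. -/
/-!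
The inverse is guessed explicitly: `M i j = m_d(z) w ^ dist(i, j)` with `w = -m_sc(z)/√(d-1)`.
In a tree, a vertex `i ≠ j` has exactly one neighbour at distance `dist(i, j) - 1` from `j` and
all its other neighbours at distance `dist(i, j) + 1`, so row `i` of the extended matrix times `M`
reduces, at `j`, to `w ^ (dist(i, j) - 1)` times a scalar depending only on `deg i`. The boundary
term `(d - deg i)/(d - 1) · m_sc` exactly compensates the missing neighbours, making this scalar a
multiple of `m_sc² + z m_sc + 1 = 0`; on the diagonal the same compensation leaves
`-z - d m_sc/(d - 1) = m_d(z)⁻¹`.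
-/

open scoped Classical

noncomputable section

namespace Paper

/-- The degree of a vertex `v` in `G`. -/
def deg {V : Type} (G : SimpleGraph V) (v : V) : ℕ :=
  Nat.card {u : V // G.Adj v u}

/-- `G` is a `d`-regular graph. -/
def IsRegular {V : Type} (d : ℕ) (G : SimpleGraph V) : Prop :=
  ∀ v, deg G v = d

/-- The excess of a finite graph: #edges - #vertices + #components. -/
def excess {V : Type} (G : SimpleGraph V) : ℤ :=
  (Nat.card G.edgeSet : ℤ) - (Nat.card V : ℤ) + (Nat.card G.ConnectedComponent : ℤ)

/-- The set of vertices at graph distance at most `R` from the set `S`. -/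
def ball {V : Type} (G : SimpleGraph V) (S : Set V) (R : ℝ) : Set V :=
  {v | ∃ u ∈ S, ∃ w : G.Walk u v, (w.length : ℝ) ≤ R}

/-- There is a path between `u` and `v` of length at most `R`. -/
def distLE {V : Type} (G : SimpleGraph V) (u v : V) (R : ℝ) : Prop :=
  ∃ w : G.Walk u v, (w.length : ℝ) ≤ R

/-- The normalized adjacency matrix `A/√(d-1)`, over `ℂ`. -/
def normAdj {V : Type} (d : ℕ) (G : SimpleGraph V) : Matrix V V ℂ :=
  Matrix.of fun i j => if G.Adj i j then ((Real.sqrt ((d : ℝ) - 1) : ℂ))⁻¹ else 0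

/-- The normalized adjacency matrix `A/√(d-1)`, over `ℝ`. -/
def normAdjR {V : Type} (d : ℕ) (G : SimpleGraph V) : Matrix V V ℝ :=
  Matrix.of fun i j => if G.Adj i j then (Real.sqrt ((d : ℝ) - 1))⁻¹ else 0

/-- The Green's function `(H - z)⁻¹`. -/
def green {V : Type} [Fintype V] [DecidableEq V] (d : ℕ) (G : SimpleGraph V) (z : ℂ) :
    Matrix V V ℂ :=
  (normAdj d G - z • (1 : Matrix V V ℂ))⁻¹

/-- The Stieltjes transform `m_N(z) = Tr G(z)/N`. -/
def mN {V : Type} [Fintype V] [DecidableEq V] (d : ℕ) (G : SimpleGraph V) (z : ℂ) : ℂ :=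
  (Nat.card V : ℂ)⁻¹ * Matrix.trace (green d G z)

/-- `m_sc(z)`: the root of `m² + zm + 1 = 0` with positive imaginary part. -/
def mSC (z : ℂ) : ℂ :=
  if h : ∃ m : ℂ, m ^ 2 + z * m + 1 = 0 ∧ 0 < m.im then h.choose else 0

/-- `m_d(z) = (-z - d m_sc(z)/(d-1))⁻¹`. -/
def mD (d : ℕ) (z : ℂ) : ℂ :=
  (-z - (d : ℂ) * mSC z / ((d : ℂ) - 1))⁻¹

/-- `κ(z) = min(|Re z - 2|, |Re z + 2|)`. -/
def kappa (z : ℂ) : ℝ :=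
  min |z.re - 2| |z.re + 2|

/-- The matrix `H - z - Σ_v ((d - g v - deg v)/(d-1)) Δ e_vv` defining the
extension of `(G, g)` with weight `Δ`. -/
def extMatrix {V : Type} [Fintype V] [DecidableEq V] (d : ℕ) (G : SimpleGraph V)
    (g : V → ℕ) (Δ z : ℂ) : Matrix V V ℂ :=
  normAdj d G - z • (1 : Matrix V V ℂ) -
    Matrix.diagonal fun v => (((d : ℂ) - (g v : ℂ) - (deg G v : ℂ)) / ((d : ℂ) - 1)) * Δ

/-- The Green's function of the extension of `(G, g)` with weight `Δ`. -/
def extGreen {V : Type} [Fintype V] [DecidableEq V] (d : ℕ) (G : SimpleGraph V)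
    (g : V → ℕ) (Δ z : ℂ) : Matrix V V ℂ :=
  (extMatrix d G g Δ z)⁻¹

/-- Entry `(i,j)` of the Green's function of the extension with weight `Δ` of the
ball `B_R(S, G)`, the ball carrying the deficit function inherited from the ambient
deficit function `g0`. -/
def ballGreen {V : Type} [Fintype V] [DecidableEq V] (d : ℕ) (G : SimpleGraph V)
    (g0 : V → ℕ) (S : Set V) (R : ℝ) (Δ z : ℂ) (i j : V) : ℂ :=
  if h : i ∈ ball G S R ∧ j ∈ ball G S R then
    extGreen d (G.induce (ball G S R)) (fun v => g0 v.val) Δ z ⟨i, h.1⟩ ⟨j, h.2⟩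
  else 0

/-- The quantity `Q(G,z) = (Nd)⁻¹ Σ_{i ∼ j} G^{(j)}_{ii}(z)`. -/
def Qfun {N : ℕ} (d : ℕ) (G : SimpleGraph (Fin N)) (z : ℂ) : ℂ :=
  ((N : ℂ) * (d : ℂ))⁻¹ *
    ∑ j : Fin N, ∑ i : Fin N,
      if h : G.Adj i j then
        green d (G.induce {k : Fin N | k ≠ j}) z ⟨i, h.ne⟩ ⟨i, h.ne⟩
      else 0

/-- Logarithm in base `d - 1`. -/
def logb (d : ℕ) (x : ℝ) : ℝ :=
  Real.log x / Real.log ((d : ℝ) - 1)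

/-- The radius `ℜ = (c/4) log_{d-1} N`. -/
def RR (N d : ℕ) (c : ℝ) : ℝ :=
  (c / 4) * logb d (N : ℝ)

/-- The radius `r = r₀ log_{d-1} N`. -/
def rr (N d : ℕ) (r₀ : ℝ) : ℝ :=
  r₀ * logb d (N : ℝ)

/-- The set `Ω̄(ω)` of radius-`ℜ` tree-like `d`-regular graphs. -/
def OmegaBar (N d : ℕ) (c : ℝ) (ω : ℕ) : Set (SimpleGraph (Fin N)) :=
  {G | IsRegular d G ∧
    (∀ v : Fin N, excess (G.induce (ball G {v} (RR N d c))) ≤ (ω : ℤ)) ∧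
    (Nat.card {v : Fin N // ¬ (G.induce (ball G {v} (RR N d c))).IsAcyclic} : ℝ) ≤ (N : ℝ) ^ c}

/-- The control parameter `ε₀(z)`. -/
def eps0 (N d : ℕ) (a r : ℝ) (z : ℂ) : ℝ :=
  Real.log (N : ℝ) ^ (8 * a) *
    (((d : ℝ) - 1) ^ (-r) + Real.sqrt ((mD d z).im / ((N : ℝ) * z.im)) +
      ((N : ℝ) * z.im) ^ (-(2 / 3 : ℝ)))

/-- The control parameter `ε(z)`. -/
def eps (N d : ℕ) (a r : ℝ) (z : ℂ) : ℝ :=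
  if eps0 N d a r z ≤ (kappa z + z.im) / Real.log (N : ℝ) then eps0 N d a r z
  else Real.log (N : ℝ) ^ 4 * eps0 N d a r z

/-- The set `Ω(z)` of spectrally regular graphs. -/
def OmegaSet (N d : ℕ) (c a r₀ : ℝ) (ω : ℕ) (z : ℂ) : Set (SimpleGraph (Fin N)) :=
  {G | G ∈ OmegaBar N d c ω ∧
    ‖Qfun d G z - mSC z‖ ≤
      eps N d a (rr N d r₀) z / Real.sqrt (kappa z + z.im + eps N d a (rr N d r₀) z) ∧
    ∀ i j : Fin N,
      ‖green d G z i j -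
          ballGreen d G (fun v => d - deg G v) {i, j} (rr N d r₀) (Qfun d G z) z i j‖ ≤
        eps N d a (rr N d r₀) z}

/-- The set `Ω⁻(z)`. -/
def OmegaMinus (N d : ℕ) (c a r₀ : ℝ) (ω : ℕ) (z : ℂ) : Set (SimpleGraph (Fin N)) :=
  {G | G ∈ OmegaBar N d c ω ∧
    ‖Qfun d G z - mSC z‖ ≤
      eps N d a (rr N d r₀) z / (2 * Real.sqrt (kappa z + z.im + eps N d a (rr N d r₀) z)) ∧
    ∀ i j : Fin N,
      ‖green d G z i j -
          ballGreen d G (fun v => d - deg G v) {i, j} (rr N d r₀) (Qfun d G z) z i j‖ ≤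
        eps N d a (rr N d r₀) z / 2}

/-- `(T, o)` is a depth-`k` truncated `(d-1)`-ary tree with root `o`. -/
def IsTruncAry (d k : ℕ) {V : Type} (T : SimpleGraph V) (o : V) : Prop :=
  T.IsTree ∧ (∀ v, T.dist o v ≤ k) ∧ deg T o = d - 1 ∧
    ∀ v, v ≠ o → T.dist o v < k → deg T v = d

/-- `(T, o)` is a depth-`k` truncated `d`-regular tree with root `o`. -/
def IsTruncReg (d k : ℕ) {V : Type} (T : SimpleGraph V) (o : V) : Prop :=
  T.IsTree ∧ (∀ v, T.dist o v ≤ k) ∧ ∀ v, T.dist o v < k → deg T v = d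

/-- The Kesten–McKay density. -/
def rhoD (d : ℕ) (x : ℝ) : ℝ :=
  (1 + 1 / ((d : ℝ) - 1) - x ^ 2 / (d : ℝ))⁻¹ * Real.sqrt (max (4 - x ^ 2) 0) / (2 * Real.pi)

/-- The diameter of a finite graph. -/
def gDiam {V : Type} [Fintype V] (T : SimpleGraph V) : ℕ :=
  Finset.univ.sup fun p : V × V => T.dist p.1 p.2

/-- The set of boundary edges of `s`, oriented from inside to outside. -/
def bndSet {V : Type} (G : SimpleGraph V) (s : Set V) : Set (V × V) :=
  {p | G.Adj p.1 p.2 ∧ p.1 ∈ s ∧ p.2 ∉ s}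

/-- The vertex set of the connected component of `u` in the subgraph induced on `s`. -/
def comp {V : Type} (G : SimpleGraph V) (s : Set V) (u : V) : Set V :=
  {w | ∃ (hu : u ∈ s) (hw : w ∈ s), (G.induce s).Reachable ⟨u, hu⟩ ⟨w, hw⟩}

/-- The number of neighbors of `v` inside `s`. -/
def degIn {V : Type} (G : SimpleGraph V) (s : Set V) (v : V) : ℕ :=
  Nat.card {w : V // w ∈ s ∧ G.Adj v w}

/-- The deterministic correction `δ_Q(z)`. -/
def deltaQ (N d l : ℕ) (z : ℂ) : ℂ :=
  (((d : ℂ) - 1) ^ (l + 1) - 1) * mSC z ^ (2 * l + 2) *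
    (1 + mSC z / (Real.sqrt ((d : ℝ) - 1) : ℂ)) ^ 2 *
    ((N : ℂ) * ((d : ℂ) / (Real.sqrt ((d : ℝ) - 1) : ℂ) - z))⁻¹

end Paper

namespace SimpleGraph

variable {V : Type*} {T : SimpleGraph V}

lemma IsTree.dist_snd_add_one (hT : T.IsTree) {i j : V} {p : T.Walk i j}
    (hp : p.length = T.dist i j) (hij : i ≠ j) : T.dist p.snd j + 1 = T.dist i j := by
  have hnil : ¬ p.Nil := fun h => hij h.eq
  have htail : T.dist p.snd j + 1 ≤ T.dist i j := by
    have := dist_le p.tail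
    have := Walk.length_tail_add_one hnil
    omega
  rcases hT.dist_eq_dist_add_one_of_adj j (p.adj_snd hnil) with h | h <;>
    rw [dist_comm (u := j), dist_comm (u := j)] at h <;> omega

lemma IsTree.dist_eq_add_one_of_adj_of_ne_snd (hT : T.IsTree) {i j k : V} {p : T.Walk i j}
    (hp : p.IsPath) (hik : T.Adj i k) (hk : k ≠ p.snd) : T.dist k j = T.dist i j + 1 := by
  rw [dist_comm (u := k), dist_comm (u := i)]
  refine (hT.dist_eq_dist_add_one_of_adj j hik).resolve_left fun hcloser => ?_
  obtain ⟨q, hq, hql⟩ := hT.connected.exists_path_of_dist j k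
  by_cases hi : i ∈ q.support
  · -- the geodesic to `k` would pass through `i`, making `k` farther than `i`
    have hlen := congrArg Walk.length (hT.isAcyclic.path_concat hp.reverse hq hik hi)
    have := dist_le p.reverse
    rw [Walk.length_concat] at hlen
    omega
  · have hk' := hT.isAcyclic.mem_support_of_ne_mem_support_of_adj_of_isPath hp.reverse hq hik hi
    rw [Walk.support_reverse, List.mem_reverse] at hk'
    exact hk (hT.isAcyclic.eq_snd_of_adj_start hp hik hk')

section DistPow

variable [Fintype V] [DecidableRel T.Adj] {R : Type*} [CommRing R]

variable (T) in
def distPowMatrix (w : R) : Matrix V V R :=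
  Matrix.of fun i j => w ^ T.dist i j

lemma adjMatrix_mul_distPowMatrix_apply_self (w : R) (i : V) :
    (T.adjMatrix R * T.distPowMatrix w) i i = T.degree i * w := by
  rw [adjMatrix_mul_apply, ← card_neighborFinset_eq_degree, ← nsmul_eq_mul,
    ← Finset.sum_const]
  refine Finset.sum_congr rfl fun k hk => ?_
  rw [mem_neighborFinset] at hk
  simp [distPowMatrix, dist_eq_one_iff_adj.2 hk.symm]

lemma IsTree.adjMatrix_mul_distPowMatrix_apply_of_ne (hT : T.IsTree) (w : R) {i j : V}
    (hij : i ≠ j) :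
    (T.adjMatrix R * T.distPowMatrix w) i j =
      w ^ (T.dist i j - 1) * (1 + ((T.degree i : R) - 1) * w ^ 2) := by
  obtain ⟨p, hp, hpl⟩ := hT.connected.exists_path_of_dist i j
  have hsnd : p.snd ∈ T.neighborFinset i :=
    (mem_neighborFinset _ _ _).2 (p.adj_snd fun h => hij h.eq)
  have hfar : ∀ k ∈ (T.neighborFinset i).erase p.snd,
      T.distPowMatrix w k j = w ^ (T.dist i j + 1) := fun k hk => by
    obtain ⟨hne, hk⟩ := Finset.mem_erase.1 hk
    rw [mem_neighborFinset] at hk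
    simp [distPowMatrix, hT.dist_eq_add_one_of_adj_of_ne_snd hp hk hne]
  have hdeg : 1 ≤ T.degree i := Finset.card_pos.2 ⟨_, hsnd⟩
  rw [adjMatrix_mul_apply, ← Finset.add_sum_erase _ _ hsnd, Finset.sum_congr rfl hfar,
    Finset.sum_const, Finset.card_erase_of_mem hsnd, card_neighborFinset_eq_degree, nsmul_eq_mul,
    Nat.cast_sub hdeg, ← hT.dist_snd_add_one hpl hij]
  simp only [distPowMatrix, Matrix.of_apply, Nat.add_sub_cancel, Nat.cast_one]
  ring

end DistPow

end SimpleGraph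

namespace Paper

lemma mSC_exists {z : ℂ} (hz : 0 < z.im) : ∃ m : ℂ, m ^ 2 + z * m + 1 = 0 ∧ 0 < m.im := by
  obtain ⟨r, hr⟩ : ∃ r : ℂ, r ^ 2 = z ^ 2 - 4 := IsAlgClosed.exists_pow_nat_eq _ two_pos
  set m₁ := (-z + r) / 2
  set m₂ := (-z - r) / 2
  have hroot₁ : m₁ ^ 2 + z * m₁ + 1 = 0 := by linear_combination hr / 4
  have hroot₂ : m₂ ^ 2 + z * m₂ + 1 = 0 := by linear_combination hr / 4
  -- the two roots have product `1` and sum `-z`, so their imaginary parts have opposite signs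
  have hm₂ : m₂ = m₁⁻¹ := eq_inv_of_mul_eq_one_right (by linear_combination -hr / 4)
  have him₂ : m₂.im = -m₁.im / Complex.normSq m₁ := by rw [hm₂, Complex.inv_im]
  have hsum : m₁.im + m₂.im = -z.im := by
    rw [← Complex.add_im, show m₁ + m₂ = -z by ring, Complex.neg_im]
  rcases lt_trichotomy 0 m₁.im with h | h | h
  · exact ⟨m₁, hroot₁, h⟩
  · rw [him₂, ← h] at hsum
    simp only [neg_zero, zero_div, add_zero] at hsum
    linarith
  · refine ⟨m₂, hroot₂, ?_⟩
    have hm₁ : m₁ ≠ 0 := fun h0 => h.ne (by simp [h0])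
    rw [him₂]
    exact div_pos (neg_pos.2 h) (Complex.normSq_pos.2 hm₁)

lemma mSC_spec {z : ℂ} (hz : 0 < z.im) : mSC z ^ 2 + z * mSC z + 1 = 0 ∧ 0 < (mSC z).im := by
  rw [mSC, dif_pos (mSC_exists hz)]
  exact (mSC_exists hz).choose_spec

lemma mD_ne_zero {d : ℕ} (hd : 1 < d) {z : ℂ} (hz : 0 < z.im) : mD d z ≠ 0 := by
  refine inv_ne_zero fun h => ?_
  have hd1 : (0 : ℝ) < d - 1 := by
    have : (1 : ℝ) < d := by exact_mod_cast hd
    linarith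
  have hz' : z = -(((d / (d - 1) : ℝ)) : ℂ) * mSC z := by
    have : (d : ℂ) - 1 ≠ 0 := by exact_mod_cast hd1.ne'
    push_cast
    linear_combination -h
  have him := congrArg Complex.im hz'
  rw [neg_mul, Complex.neg_im, Complex.im_ofReal_mul] at him
  have := mul_pos (div_pos (show (0 : ℝ) < d by linarith) hd1) (mSC_spec hz).2
  linarith

lemma deg_eq_degree {V : Type} (G : SimpleGraph V) (v : V) [Fintype (G.neighborSet v)] :
    deg G v = G.degree v := by
  rw [deg, ← SimpleGraph.card_neighborSet_eq_degree, ← Nat.card_eq_fintype_card]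
  rfl

lemma extMatrix_eq {V : Type} [Fintype V] [DecidableEq V] (d : ℕ) (G : SimpleGraph V)
    (g : V → ℕ) (Δ z : ℂ) :
    extMatrix d G g Δ z = ((Real.sqrt ((d : ℝ) - 1) : ℂ))⁻¹ • G.adjMatrix ℂ -
      Matrix.diagonal fun v => z + ((d : ℂ) - g v - deg G v) / ((d : ℂ) - 1) * Δ := by
  ext i j
  by_cases h : i = j
  · subst h
    simp [extMatrix, normAdj]
    ring
  · simp [extMatrix, normAdj, h]

lemma extMatrix_mul_distPowMatrix {d : ℕ} (hd : 1 < d) {V : Type} [Fintype V] [DecidableEq V]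
    {T : SimpleGraph V} (hT : T.IsTree) {z : ℂ} (hz : 0 < z.im) :
    extMatrix d T (fun _ => 0) (mSC z) z *
      (mD d z • T.distPowMatrix (-(mSC z) / (Real.sqrt ((d : ℝ) - 1) : ℂ))) = 1 := by
  set m := mSC z
  set s : ℂ := (Real.sqrt ((d : ℝ) - 1) : ℂ)
  set c : V → ℂ := fun v => z + ((d : ℂ) - T.degree v) / ((d : ℂ) - 1) * m
  have hd1 : (0 : ℝ) ≤ d - 1 := by
    have : (1 : ℝ) < d := by exact_mod_cast hd
    linarith
  have hs2 : s ^ 2 = (d : ℂ) - 1 := by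
    rw [← Complex.ofReal_pow, Real.sq_sqrt hd1]
    push_cast
    ring
  have hs : s ≠ 0 := fun h => by
    have : (d : ℂ) = 1 := by linear_combination -hs2 + h * s
    exact absurd (by exact_mod_cast this) hd.ne'
  have hd1' : (d : ℂ) - 1 ≠ 0 := by rw [← hs2]; exact pow_ne_zero 2 hs
  have hentry : ∀ i j, (extMatrix d T (fun _ => 0) m z *
      (mD d z • T.distPowMatrix (-m / s))) i j =
      mD d z * (s⁻¹ * (T.adjMatrix ℂ * T.distPowMatrix (-m / s)) i j -
        c i * T.distPowMatrix (-m / s) i j) := fun i j => by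
    rw [extMatrix_eq, Matrix.mul_smul, Matrix.smul_apply, Matrix.sub_mul, Matrix.sub_apply,
      Matrix.smul_mul, Matrix.smul_apply, Matrix.diagonal_mul, smul_eq_mul, smul_eq_mul]
    simp only [Nat.cast_zero, sub_zero, deg_eq_degree, c]
    rfl
  ext i j
  rw [hentry]
  by_cases hij : i = j
  · subst hij
    have hdiag : s⁻¹ * (T.degree i * (-m / s)) - c i * 1 = (mD d z)⁻¹ := by
      rw [mD, inv_inv]
      simp only [c]
      field_simp
      linear_combination (T.degree i * m) * hs2
    rw [SimpleGraph.adjMatrix_mul_distPowMatrix_apply_self]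
    simp only [SimpleGraph.distPowMatrix, Matrix.of_apply, SimpleGraph.dist_self, pow_zero]
    rw [hdiag, mul_inv_cancel₀ (mD_ne_zero hd hz), Matrix.one_apply_eq]
  · have hoff : s⁻¹ * (1 + (T.degree i - 1) * (-m / s) ^ 2) - c i * (-m / s) = 0 := by
      simp only [c]
      field_simp
      linear_combination
        ((d : ℂ) - 1) * s ^ 2 * (mSC_spec hz).1 - m ^ 2 * (T.degree i - 1) * hs2
    obtain ⟨n, hn⟩ : ∃ n, T.dist i j = n + 1 :=
      Nat.exists_eq_add_one.2 (hT.connected.pos_dist_of_ne hij)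
    rw [hT.adjMatrix_mul_distPowMatrix_apply_of_ne _ hij, Matrix.one_apply_ne hij]
    simp only [SimpleGraph.distPowMatrix, Matrix.of_apply, hn, Nat.add_sub_cancel]
    linear_combination (mD d z * (-m / s) ^ n) * hoff

theorem statement10_general (d : ℕ) (hd : 3 ≤ d) {V : Type} [Fintype V] [DecidableEq V]
    (T : SimpleGraph V) (hT : T.IsTree) (z : ℂ) (hz : 0 < z.im) :
    IsUnit (extMatrix d T (fun _ => 0) (mSC z) z) ∧
      ∀ i j : V,
        extGreen d T (fun _ => 0) (mSC z) z i j =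
          mD d z * (-(mSC z) / (Real.sqrt ((d : ℝ) - 1) : ℂ)) ^ T.dist i j := by
  have key := extMatrix_mul_distPowMatrix (d := d) (by omega) hT hz
  refine ⟨(Matrix.isUnit_iff_isUnit_det _).2 (Matrix.isUnit_det_of_right_inverse key),
    fun i j => ?_⟩
  rw [extGreen, Matrix.inv_eq_right_inv key]
  simp only [Matrix.smul_apply, SimpleGraph.distPowMatrix, Matrix.of_apply, smul_eq_mul]

/-- Green's function of the extension of a finite tree (zero deficit
function) with weight `m_sc(z)`: invertibility and the explicit formula
`G_ij = m_d(z) (-m_sc(z)/√(d-1))^{dist(i,j)}`. -/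
theorem statement10 (d : ℕ) (hd : 3 ≤ d) {V : Type} [Fintype V] [DecidableEq V]
    (T : SimpleGraph V) (hT : T.IsTree) (hdeg : ∀ v, deg T v ≤ d) (z : ℂ) (hz : 0 < z.im) :
    IsUnit (extMatrix d T (fun _ => 0) (mSC z) z) ∧
      ∀ i j : V,
        extGreen d T (fun _ => 0) (mSC z) z i j =
          mD d z * (-(mSC z) / (Real.sqrt ((d : ℝ) - 1) : ℂ)) ^ T.dist i j :=
  statement10_general d hd T hT z hz

end Paper
end
end

section
/- Under the setup in the context, assume that the ball B_R(o,𝒢) has excess at most ω. Let 𝒜 be the annulus obtained from B_R(o,𝒢) by deleting the vertices of 𝕋, and partition {1,…,μ} into classes A_1,…,A_κ by declaring α and β to lie in the same class if and only if a_α and a_β belong to the same connected component of 𝒜. Then Σ_{s : |A_s| ≥ 2} |A_s| ≤ 2ω, and for every s ∈ {1,…,κ}, the connected component of 𝒜 containing the vertices {a_α : α ∈ A_s} has excess at most ω − |A_s| + 1. -/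
open scoped Classical

noncomputable section

/-!
Write `T = B_ℓ(o)`, `B = B_R(o)` and `A = B \ T`; let `μ` be the number of boundary edges of `T`
and `κ` the number of components of `A`. Both `T` and `B` induce connected graphs, and since
`R ≥ ℓ + 1` every boundary edge ends in `A`. Splitting the edges of `B` into those inside `T`,
inside `A` and between them, and using `e(T) ≥ |T| - 1`, gives `μ + e(A) - |A| ≤ excess B ≤ ω`.
Walking from a vertex of `A` back to `o` shows that every component of `A` receives a boundary
edge, so the classes `A_s` are the fibres of a surjection onto the `κ` components. Since
`e(A) - |A| ≥ -κ`, this gives `μ - κ ≤ ω`, and at most `2(μ - κ)` boundary edges lie in classes of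
size at least two. For the component `C` of a class `A_s`, the rest of `A` receives the other
`μ - |A_s|` boundary edges, hence has at most that many components, which bounds `e(C) - |C|`.
-/

theorem card_nonsingleton_fiber_add_two_mul_card_le {X Y : Type} [Finite X] {f : X → Y}
    (hf : f.Surjective) :
    Nat.card {x // ∃ y, y ≠ x ∧ f y = f x} + 2 * Nat.card Y ≤ 2 * Nat.card X := by
  have := Fintype.ofFinite X
  have : Finite Y := Finite.of_surjective f hf
  have := Fintype.ofFinite Y
  set M := Finset.univ.filter fun x => ∃ y, y ≠ x ∧ f y = f x
  set S := Finset.univ.filter fun x => ¬ ∃ y, y ≠ x ∧ f y = f x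
  have hcover : (Finset.univ : Finset Y) ⊆ S.image f ∪ M.image f := by
    intro b _
    obtain ⟨x, rfl⟩ := hf b
    by_cases hx : ∃ y, y ≠ x ∧ f y = f x
    · exact Finset.mem_union_right _ (Finset.mem_image_of_mem f (by simpa [M] using hx))
    · exact Finset.mem_union_left _ (Finset.mem_image_of_mem f (by simpa [S] using hx))
  have hM : 2 * (M.image f).card ≤ M.card := by
    refine Finset.mul_card_image_le_card M 2 fun b hb => ?_
    obtain ⟨x, hxM, rfl⟩ := Finset.mem_image.mp hb
    obtain ⟨y, hyx, hfy⟩ := (Finset.mem_filter.mp hxM).2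
    have hyM : y ∈ M := Finset.mem_filter.mpr ⟨Finset.mem_univ _, x, hyx.symm, hfy.symm⟩
    exact Finset.one_lt_card.mpr ⟨x, by simp [hxM], y, by simp [hyM, hfy], hyx.symm⟩
  have hY := (Finset.card_le_card hcover).trans (Finset.card_union_le _ _)
  have hS := Finset.card_image_le (s := S) (f := f)
  have hX : S.card + M.card = Fintype.card X := by
    rw [add_comm]; exact Finset.card_filter_add_card_filter_not _
  rw [Nat.card_eq_fintype_card, Fintype.card_subtype, Nat.card_eq_fintype_card,
    Nat.card_eq_fintype_card]
  rw [Finset.card_univ] at hY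
  change M.card + _ ≤ _
  omega

namespace SimpleGraph

variable {V : Type} {G : SimpleGraph V}

theorem card_le_card_edgeSet_add_card_connectedComponent [Finite V] (G : SimpleGraph V) :
    Nat.card V ≤ Nat.card G.edgeSet + Nat.card G.ConnectedComponent := by
  have := Fintype.ofFinite V
  let f : (Σ c : G.ConnectedComponent, c.toSimpleGraph.edgeSet) → G.edgeSet :=
    fun x => (Embedding.induce x.1.supp).mapEdgeSet x.2
  have hf : f.Injective := by
    rintro ⟨c, e⟩ ⟨c', e'⟩ h
    have hv : (e : Sym2 c.supp).out.1.1 ∈ c'.supp := by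
      have : (e : Sym2 c.supp).out.1.1 ∈ (f ⟨c', e'⟩ : Sym2 V) :=
        h ▸ Sym2.mem_map.mpr ⟨_, Sym2.out_fst_mem _, rfl⟩
      obtain ⟨w, -, hw⟩ := Sym2.mem_map.mp this
      exact hw ▸ w.2
    obtain rfl : c = c' := (e : Sym2 c.supp).out.1.2.symm.trans hv
    exact congrArg (Sigma.mk c) ((Embedding.induce c.supp).mapEdgeSet.injective h)
  calc Nat.card V = Nat.card (Σ c : G.ConnectedComponent, c.supp) :=
        Nat.card_congr (Equiv.sigmaFiberEquiv G.connectedComponentMk).symm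
    _ = ∑ c : G.ConnectedComponent, Nat.card c.supp := Nat.card_sigma
    _ ≤ ∑ c : G.ConnectedComponent, (Nat.card c.toSimpleGraph.edgeSet + 1) :=
        Finset.sum_le_sum fun c _ => c.connected_toSimpleGraph.card_vert_le_card_edgeSet_add_one
    _ = Nat.card (Σ c : G.ConnectedComponent, c.toSimpleGraph.edgeSet) +
          Nat.card G.ConnectedComponent := by
        rw [Finset.sum_add_distrib, Nat.card_sigma, Nat.card_eq_fintype_card]; simp
    _ ≤ Nat.card G.edgeSet + Nat.card G.ConnectedComponent :=
        Nat.add_le_add_right (Nat.card_le_card_of_injective f hf) _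

def adjPairs (G : SimpleGraph V) (A B : Set V) : Set (V × V) :=
  {p | G.Adj p.1 p.2 ∧ p.1 ∈ A ∧ p.2 ∈ B}

theorem ncard_adjPairs_comm (A B : Set V) : (G.adjPairs A B).ncard = (G.adjPairs B A).ncard :=
  Set.ncard_congr (fun p _ => p.swap) (fun _ ⟨h, ha, hb⟩ => ⟨h.symm, hb, ha⟩)
    (fun _ _ _ _ h => Prod.swap_injective h) (fun q ⟨h, hb, ha⟩ => ⟨q.swap, ⟨h.symm, ha, hb⟩, rfl⟩)

theorem ncard_adjPairs_union_left [Finite V] {A A' : Set V} (h : Disjoint A A') (B : Set V) :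
    (G.adjPairs (A ∪ A') B).ncard = (G.adjPairs A B).ncard + (G.adjPairs A' B).ncard := by
  rw [← Set.ncard_union_eq
    (Set.disjoint_left.mpr fun _ hp hp' => h.notMem_of_mem_left hp.2.1 hp'.2.1)]
  congr 1
  ext p
  simp only [adjPairs, Set.mem_union, Set.mem_ofPred_eq]
  tauto

theorem ncard_adjPairs_union_right [Finite V] (A : Set V) {B B' : Set V} (h : Disjoint B B') :
    (G.adjPairs A (B ∪ B')).ncard = (G.adjPairs A B).ncard + (G.adjPairs A B').ncard := by
  rw [ncard_adjPairs_comm, ncard_adjPairs_union_left h, ncard_adjPairs_comm B,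
    ncard_adjPairs_comm B']

theorem two_mul_card_edgeSet_induce [Finite V] (s : Set V) :
    2 * Nat.card (G.induce s).edgeSet = (G.adjPairs s s).ncard := by
  have := Fintype.ofFinite V
  rw [Nat.card_eq_fintype_card, card_edgeSet, ← dart_card_eq_twice_card_edges,
    ← Nat.card_eq_fintype_card, ← Nat.card_coe_set_eq]
  exact Nat.card_congr
    { toFun := fun d => ⟨(d.fst, d.snd), d.adj, d.fst.2, d.snd.2⟩
      invFun := fun p => ⟨(⟨p.1.1, p.2.2.1⟩, ⟨p.1.2, p.2.2.2⟩), p.2.1⟩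
      left_inv := fun _ => rfl
      right_inv := fun _ => rfl }

theorem card_edgeSet_induce_of_subset [Finite V] {s t : Set V} (hst : s ⊆ t) :
    Nat.card (G.induce t).edgeSet = Nat.card (G.induce s).edgeSet +
      Nat.card (G.induce (t \ s)).edgeSet + (G.adjPairs s (t \ s)).ncard := by
  have hd : Disjoint s (t \ s) := Set.disjoint_sdiff_right
  have hpairs : (G.adjPairs t t).ncard = (G.adjPairs s s).ncard +
      (G.adjPairs (t \ s) (t \ s)).ncard + 2 * (G.adjPairs s (t \ s)).ncard := by
    conv_lhs => rw [← Set.union_sdiff_cancel hst]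
    rw [ncard_adjPairs_union_left hd, ncard_adjPairs_union_right _ hd,
      ncard_adjPairs_union_right _ hd, ncard_adjPairs_comm (t \ s) s]
    ring
  have := G.two_mul_card_edgeSet_induce t
  have := G.two_mul_card_edgeSet_induce s
  have := G.two_mul_card_edgeSet_induce (t \ s)
  omega

theorem Walk.reachable_induce_of_support_subset {s : Set V} {u v : V} (p : G.Walk u v)
    (hp : ∀ x ∈ p.support, x ∈ s) :
    (G.induce s).Reachable ⟨u, hp u p.start_mem_support⟩ ⟨v, hp v p.end_mem_support⟩ :=
  (p.connected_induce_support.preconnected ⟨u, p.start_mem_support⟩ ⟨v, p.end_mem_support⟩).map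
    (G.induceHomOfLE hp).toHom

end SimpleGraph

namespace Paper

open SimpleGraph

section Graph

variable {V : Type} {G : SimpleGraph V}

theorem excess_eq_of_connected (h : G.Connected) :
    excess G = (Nat.card G.edgeSet : ℤ) - Nat.card V + 1 := by
  have := h.preconnected.subsingleton_connectedComponent
  have : Nonempty G.ConnectedComponent := ⟨G.connectedComponentMk h.nonempty.some⟩
  rw [excess, Nat.card_unique (α := G.ConnectedComponent), Nat.cast_one]

section Comp

variable {s : Set V} {u v w : V}

theorem comp_subset : comp G s u ⊆ s := fun _ h => h.2.1

theorem mem_comp_self (hu : u ∈ s) : u ∈ comp G s u := ⟨hu, hu, .rfl⟩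

theorem comp_eq_of_mem (hv : v ∈ comp G s u) : comp G s v = comp G s u := by
  obtain ⟨hu, hv, huv⟩ := hv
  ext w
  exact ⟨fun ⟨_, hw, h⟩ => ⟨hu, hw, huv.trans h⟩, fun ⟨_, hw, h⟩ => ⟨hv, hw, huv.symm.trans h⟩⟩

theorem mem_comp_of_adj (hv : v ∈ comp G s u) (hvw : G.Adj v w) (hw : w ∈ s) :
    w ∈ comp G s u := by
  obtain ⟨hu, hv, huv⟩ := hv
  exact ⟨hu, hw, huv.trans (Adj.reachable (G := G.induce s) (u := ⟨v, hv⟩) (v := ⟨w, hw⟩) hvw)⟩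

theorem connected_induce_comp (hu : u ∈ s) : (G.induce (comp G s u)).Connected := by
  refine (connected_iff_exists_forall_reachable _).mpr ⟨⟨u, mem_comp_self hu⟩, ?_⟩
  rintro ⟨w, hw⟩
  obtain ⟨_, _, ⟨p⟩⟩ := hw
  have hsupp : ∀ x ∈ (p.map (Embedding.induce s).toHom).support, x ∈ comp G s u := by
    intro x hx
    obtain ⟨y, hy, rfl⟩ := List.mem_map.mp ((Walk.support_map _ _) ▸ hx)
    exact ⟨hu, y.2, ⟨p.takeUntil y hy⟩⟩
  exact (p.map (Embedding.induce s).toHom).reachable_induce_of_support_subset hsupp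

end Comp

section Ball

variable {S : Set V} {o u v : V} {r R : ℝ}

theorem ball_mono (h : r ≤ R) : ball G S r ⊆ ball G S R :=
  fun _ ⟨u, hu, w, hw⟩ => ⟨u, hu, w, hw.trans h⟩

theorem mem_ball_add_one_of_adj (hv : v ∈ ball G S r) (h : G.Adj v u) : u ∈ ball G S (r + 1) := by
  obtain ⟨o, ho, w, hw⟩ := hv
  exact ⟨o, ho, w.concat h, by rw [Walk.length_concat]; push_cast; linarith⟩

theorem support_subset_ball {w : G.Walk o v} (hw : (w.length : ℝ) ≤ R) :
    ∀ x ∈ w.support, x ∈ ball G {o} R := fun x hx =>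
  ⟨o, rfl, w.takeUntil x hx, le_trans (by exact_mod_cast w.length_takeUntil_le_length hx) hw⟩

theorem mem_ball_self (hR : 0 ≤ R) : o ∈ ball G {o} R := ⟨o, rfl, .nil, by simpa using hR⟩

theorem connected_induce_ball (hR : 0 ≤ R) : (G.induce (ball G {o} R)).Connected := by
  refine (connected_iff_exists_forall_reachable _).mpr ⟨⟨o, mem_ball_self hR⟩, ?_⟩
  rintro ⟨v, _, rfl, w, hw⟩
  exact w.reachable_induce_of_support_subset (support_subset_ball hw)

end Ball

theorem exists_bndSet_mem_comp {T B : Set V} {u v : V} (w : G.Walk v u) (hu : u ∈ T)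
    (hv : v ∉ T) (hw : ∀ x ∈ w.support, x ∈ B) :
    ∃ q ∈ bndSet G T, q.2 ∈ comp G (B \ T) v := by
  induction w with
  | nil => exact absurd hu hv
  | @cons v a u h p ih =>
    have hvA : v ∈ B \ T := ⟨hw v (by simp), hv⟩
    by_cases haT : a ∈ T
    · exact ⟨(a, v), ⟨h.symm, haT, hv⟩, mem_comp_self hvA⟩
    · obtain ⟨q, hq, hqa⟩ := ih hu haT fun x hx => hw x (by simp [hx])
      have ha : a ∈ comp G (B \ T) v := mem_comp_of_adj (mem_comp_self hvA) h ⟨hw a (by simp), haT⟩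
      exact ⟨q, hq, comp_eq_of_mem ha ▸ hqa⟩

section Annulus

variable {T B : Set V}

/-- The classes `A_s` of the boundary edges are the fibres of `outerComponent G T (B \ T)`. -/
def outerComponent (G : SimpleGraph V) (T X : Set V) (q : {q // q ∈ bndSet G T ∧ q.2 ∈ X}) :
    (G.induce X).ConnectedComponent :=
  (G.induce X).connectedComponentMk ⟨q.1.2, q.2.2⟩

theorem outerComponent_surjective {X : Set V} (hXA : X ⊆ B \ T)
    (hX : ∀ v ∈ X, comp G (B \ T) v ⊆ X)
    (hreach : ∀ v ∈ B \ T, ∃ q ∈ bndSet G T, q.2 ∈ comp G (B \ T) v) :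
    (outerComponent G T X).Surjective := by
  refine ConnectedComponent.ind fun ⟨v, hv⟩ => ?_
  obtain ⟨q, hq, hqv⟩ := hreach v (hXA hv)
  refine ⟨⟨q, hq, hX v hv hqv⟩, ConnectedComponent.sound ?_⟩
  have hv' := mem_comp_self (G := G) (hXA hv)
  exact ((connected_induce_comp (hXA hv)).preconnected ⟨q.2, hqv⟩ ⟨v, hv'⟩).map
    (G.induceHomOfLE (hX v hv)).toHom

theorem outerComponent_eq_iff {x y : {q // q ∈ bndSet G T ∧ q.2 ∈ B \ T}} :
    outerComponent G T (B \ T) y = outerComponent G T (B \ T) x ↔ y.1.2 ∈ comp G (B \ T) x.1.2 :=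
  ConnectedComponent.eq.trans ⟨fun h => ⟨x.2.2, y.2.2, h.symm⟩, fun ⟨_, _, h⟩ => h.symm⟩

theorem bndSet_eq_adjPairs (hout : ∀ q ∈ bndSet G T, q.2 ∈ B) :
    bndSet G T = G.adjPairs T (B \ T) := by
  ext q
  exact ⟨fun hq => ⟨hq.1, hq.2.1, hout q hq, hq.2.2⟩, fun ⟨h, hT, _, hnT⟩ => ⟨h, hT, hnT⟩⟩

variable [Finite V]

theorem card_bndSet_add_card_edgeSet_sdiff_le (hTB : T ⊆ B) (hT : (G.induce T).Connected)
    (hB : (G.induce B).Connected) (hout : ∀ q ∈ bndSet G T, q.2 ∈ B) :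
    (Nat.card (bndSet G T) : ℤ) + Nat.card (G.induce (B \ T)).edgeSet - Nat.card ↥(B \ T) ≤
      excess (G.induce B) := by
  have hvert : Nat.card ↥(B \ T) + Nat.card T = Nat.card B := by
    simp only [Nat.card_coe_set_eq]; exact Set.ncard_sdiff_add_ncard_of_subset hTB
  have hedge := G.card_edgeSet_induce_of_subset hTB
  rw [← bndSet_eq_adjPairs hout, ← Nat.card_coe_set_eq] at hedge
  have := hT.card_vert_le_card_edgeSet_add_one
  rw [excess_eq_of_connected hB]
  omega

theorem card_shared_bndSet_le (hout : ∀ q ∈ bndSet G T, q.2 ∈ B)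
    (hreach : ∀ v ∈ B \ T, ∃ q ∈ bndSet G T, q.2 ∈ comp G (B \ T) v) :
    Nat.card {p // p ∈ bndSet G T ∧
        ∃ q, q ∈ bndSet G T ∧ q ≠ p ∧ q.2 ∈ comp G (B \ T) p.2} + 2 * Nat.card ↥(B \ T) ≤
      2 * (Nat.card (bndSet G T) + Nat.card (G.induce (B \ T)).edgeSet) := by
  have hA : ∀ q ∈ bndSet G T, q.2 ∈ B \ T := fun q hq => ⟨hout q hq, hq.2.2⟩
  have hfibres := card_nonsingleton_fiber_add_two_mul_card_le
    (outerComponent_surjective subset_rfl (fun _ _ => comp_subset) hreach)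
  have hshared : Nat.card {p // p ∈ bndSet G T ∧
      ∃ q, q ∈ bndSet G T ∧ q ≠ p ∧ q.2 ∈ comp G (B \ T) p.2} ≤
      Nat.card {x // ∃ y, y ≠ x ∧ outerComponent G T (B \ T) y = outerComponent G T (B \ T) x} := by
    refine Nat.card_le_card_of_injective
      (fun p => ⟨⟨p.1, p.2.1, hA _ p.2.1⟩, ?_⟩) fun _ _ h => Subtype.ext (by simpa using h)
    obtain ⟨q, hq, hqp, hqc⟩ := p.2.2
    exact ⟨⟨q, hq, hA q hq⟩, fun h => hqp (congrArg (·.1) h), outerComponent_eq_iff.mpr hqc⟩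
  have hdom : Nat.card {q // q ∈ bndSet G T ∧ q.2 ∈ B \ T} = Nat.card (bndSet G T) :=
    Nat.card_congr (Equiv.subtypeEquivRight fun q => ⟨fun h => h.1, fun h => ⟨h, hA q h⟩⟩)
  have := card_le_card_edgeSet_add_card_connectedComponent (G.induce (B \ T))
  omega

theorem excess_induce_comp_add_card_le (hout : ∀ q ∈ bndSet G T, q.2 ∈ B)
    (hreach : ∀ v ∈ B \ T, ∃ q ∈ bndSet G T, q.2 ∈ comp G (B \ T) v) {p : V × V}
    (hp : p ∈ bndSet G T) :
    excess (G.induce (comp G (B \ T) p.2)) +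
        Nat.card {q // q ∈ bndSet G T ∧ q.2 ∈ comp G (B \ T) p.2} ≤
      (Nat.card (bndSet G T) : ℤ) + Nat.card (G.induce (B \ T)).edgeSet -
        Nat.card ↥(B \ T) + 1 := by
  have hpA : p.2 ∈ B \ T := ⟨hout p hp, hp.2.2⟩
  rw [excess_eq_of_connected (connected_induce_comp hpA)]
  set A := B \ T
  set C := comp G A p.2
  have hCA : C ⊆ A := comp_subset
  have hrest : ∀ v ∈ A \ C, comp G A v ⊆ A \ C := by
    refine fun v hv w hw => ⟨comp_subset hw, fun hwC => hv.2 ?_⟩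
    have hv' := mem_comp_self (G := G) hv.1
    rwa [← comp_eq_of_mem hw, comp_eq_of_mem hwC] at hv'
  have hκ := Nat.card_le_card_of_surjective _
    (outerComponent_surjective (X := A \ C) Set.sdiff_subset hrest hreach)
  have hbnd : Nat.card {q // q ∈ bndSet G T ∧ q.2 ∈ C} +
      Nat.card {q // q ∈ bndSet G T ∧ q.2 ∈ A \ C} ≤ Nat.card (bndSet G T) := by
    have hsub : Nat.card {q // q ∈ bndSet G T ∧ q.2 ∈ A \ C} ≤
        Nat.card ↥(bndSet G T \ {q | q.2 ∈ C}) :=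
      Nat.card_le_card_of_injective (fun q => ⟨q.1, q.2.1, q.2.2.2⟩)
        fun _ _ h => Subtype.ext (Subtype.mk.inj h)
    have := Set.ncard_inter_add_ncard_sdiff_eq_ncard (bndSet G T) {q | q.2 ∈ C}
    rw [← Nat.card_coe_set_eq, ← Nat.card_coe_set_eq, ← Nat.card_coe_set_eq] at this
    exact this ▸ Nat.add_le_add_left hsub _
  have hnoedge : G.adjPairs C (A \ C) = ∅ :=
    Set.eq_empty_of_forall_notMem fun _ ⟨h, hc, hac⟩ => hac.2 (mem_comp_of_adj hc h hac.1)
  have hedge := G.card_edgeSet_induce_of_subset hCA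
  rw [hnoedge, Set.ncard_empty] at hedge
  have hvert : Nat.card ↥(A \ C) + Nat.card C = Nat.card A := by
    simp only [Nat.card_coe_set_eq]; exact Set.ncard_sdiff_add_ncard_of_subset hCA
  have := card_le_card_edgeSet_add_card_connectedComponent (G.induce (A \ C))
  omega

end Annulus

end Graph

theorem statement17_general (N : ℕ) (G : SimpleGraph (Fin N))
    (o : Fin N) (ℓ : ℕ) (hl : 1 ≤ ℓ) (R : ℝ)
    (hR : 2 * (ℓ : ℝ) ≤ R) (ω : ℕ)
    (hex : excess (G.induce (ball G {o} R)) ≤ (ω : ℤ)) :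
    Nat.card {p : Fin N × Fin N //
        p ∈ bndSet G (ball G {o} (ℓ : ℝ)) ∧
          ∃ q : Fin N × Fin N, q ∈ bndSet G (ball G {o} (ℓ : ℝ)) ∧ q ≠ p ∧
            q.2 ∈ comp G (ball G {o} R \ ball G {o} (ℓ : ℝ)) p.2} ≤ 2 * ω ∧
    ∀ p : Fin N × Fin N, p ∈ bndSet G (ball G {o} (ℓ : ℝ)) →
      excess (G.induce (comp G (ball G {o} R \ ball G {o} (ℓ : ℝ)) p.2)) +
          (Nat.card {q : Fin N × Fin N //
              q ∈ bndSet G (ball G {o} (ℓ : ℝ)) ∧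
                q.2 ∈ comp G (ball G {o} R \ ball G {o} (ℓ : ℝ)) p.2} : ℤ)
        ≤ (ω : ℤ) + 1 := by
  have hℓ : (1 : ℝ) ≤ ℓ := by exact_mod_cast hl
  have hout : ∀ q ∈ bndSet G (ball G {o} ℓ), q.2 ∈ ball G {o} R := fun q hq =>
    ball_mono (by linarith) (mem_ball_add_one_of_adj hq.2.1 hq.1)
  have hreach : ∀ v ∈ ball G {o} R \ ball G {o} ℓ, ∃ q ∈ bndSet G (ball G {o} ℓ),
      q.2 ∈ comp G (ball G {o} R \ ball G {o} ℓ) v := by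
    rintro v ⟨⟨_, rfl, w, hw⟩, hv⟩
    refine exists_bndSet_mem_comp w.reverse (mem_ball_self (by positivity)) hv fun x hx => ?_
    exact support_subset_ball hw x (by simpa using hx)
  have hμ := (card_bndSet_add_card_edgeSet_sdiff_le (ball_mono (by linarith))
    (connected_induce_ball (by positivity)) (connected_induce_ball (by linarith)) hout).trans hex
  refine ⟨?_, fun p hp => (excess_induce_comp_add_card_le hout hreach hp).trans (by linarith)⟩
  have := card_shared_bndSet_le hout hreach
  omega

/-- grouping the boundary edges according to the connected component of
the annulus `B_R(o) \ 𝕋` containing their outer endpoint: at most `2ω` boundary edges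
lie in classes of size at least two, and the component of the outer endpoint of a
boundary edge has excess at most `ω - (size of its class) + 1`. -/
theorem statement17 (d : ℕ) (hd : 3 ≤ d) (N : ℕ) (G : SimpleGraph (Fin N))
    (hreg : IsRegular d G) (o : Fin N) (ℓ : ℕ) (hl : 1 ≤ ℓ) (R : ℝ)
    (hR : 2 * (ℓ : ℝ) ≤ R) (ω : ℕ)
    (hex : excess (G.induce (ball G {o} R)) ≤ (ω : ℤ)) :
    Nat.card {p : Fin N × Fin N //
        p ∈ bndSet G (ball G {o} (ℓ : ℝ)) ∧
          ∃ q : Fin N × Fin N, q ∈ bndSet G (ball G {o} (ℓ : ℝ)) ∧ q ≠ p ∧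
            q.2 ∈ comp G (ball G {o} R \ ball G {o} (ℓ : ℝ)) p.2} ≤ 2 * ω ∧
    ∀ p : Fin N × Fin N, p ∈ bndSet G (ball G {o} (ℓ : ℝ)) →
      excess (G.induce (comp G (ball G {o} R \ ball G {o} (ℓ : ℝ)) p.2)) +
          (Nat.card {q : Fin N × Fin N //
              q ∈ bndSet G (ball G {o} (ℓ : ℝ)) ∧
                q.2 ∈ comp G (ball G {o} R \ ball G {o} (ℓ : ℝ)) p.2} : ℤ)
        ≤ (ω : ℤ) + 1 :=
  statement17_general N G o ℓ hl R hR ω hex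

end Paper
end
end
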